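/- arXiv:1709.03169 — 12 statements merged into one kernel-verified Lean document; each statement's English description precedes it below -/
import Mathlib

section
/- Let n ≥ 2 and let φ be smooth on an open neighborhood U of Δ_n in ℝ^n with e^φ concave on Δ_n, and let π be the portfolio map multiplicatively generated by φ, π_i(p) = p_i(1 + ∂_iφ(p) − p·∇φ(p)). Then for all p, q ∈ Δ_n, the quantity Σ_{i=1}^n π_i(p) q_i/p_i is strictly positive and log(Σ_{i=1}^n π_i(p) q_i/p_i) = φ(q) − φ(p) + D_{L,φ}[q | p]. -/
open Real

/-- The open unit simplex in ℝ^n. -/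
def openSimplex (n : ℕ) : Set (Fin n → ℝ) :=
  {p | (∀ i, 0 < p i ∧ p i < 1) ∧ ∑ i, p i = 1}

/-- The portfolio map multiplicatively generated by φ:
π_i(p) = p_i (1 + ∂_iφ(p) − p·∇φ(p)) = p_i (1 + Dφ(p)[e_i − p]). -/
noncomputable def port (n : ℕ) (φ : (Fin n → ℝ) → ℝ) (p : Fin n → ℝ) (i : Fin n) : ℝ :=
  p i * (1 + fderiv ℝ φ p (Pi.single i 1 - p))

/-- The L-divergence of φ. -/
noncomputable def LDiv (n : ℕ) (φ : (Fin n → ℝ) → ℝ) (q p : Fin n → ℝ) : ℝ :=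
  Real.log (1 + fderiv ℝ φ p (q - p)) - (φ q - φ p)

/-- Gradient inequality for concave functions. -/
lemma concave_grad_ineq {E : Type*} [NormedAddCommGroup E] [NormedSpace ℝ E]
    {s : Set E} {f : E → ℝ} {f' : E →L[ℝ] ℝ} {p q : E}
    (hconc : ConcaveOn ℝ s f) (hp : p ∈ s) (hq : q ∈ s)
    (hd : HasFDerivAt f f' p) : f q - f p ≤ f' (q - p) := by
  set v := q - p with hv
  have hg : HasDerivAt (fun t : ℝ => f (p + t • v)) (f' v) 0 := by
    have hcurve : HasDerivAt (fun t : ℝ => p + t • v) v 0 := by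
      simpa using ((hasDerivAt_id (0:ℝ)).smul_const v).const_add p
    have hd' : HasFDerivAt f f' (p + (0:ℝ) • v) := by simpa using hd
    exact hd'.comp_hasDerivAt 0 hcurve
  have hslope : ∀ t ∈ Set.Ioo (0:ℝ) 1, f q - f p ≤ (f (p + t • v) - f p) / t := by
    intro t ht
    have hcombo := hconc.2 hp hq (by linarith [ht.2] : (0:ℝ) ≤ 1 - t) ht.1.le (by ring)
    have hpt : (1 - t) • p + t • q = p + t • v := by
      rw [hv]; module
    rw [hpt] at hcombo
    rw [le_div_iff₀ ht.1]
    simp only [smul_eq_mul] at hcombo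
    nlinarith [hcombo]
  have htend : Filter.Tendsto (fun t => (f (p + t • v) - f p) / t)
      (nhdsWithin 0 (Set.Ioi 0)) (nhds (f' v)) := by
    have h1 := (hasDerivAt_iff_tendsto_slope.1 hg).mono_left
      (nhdsWithin_mono 0 (by intro x hx; exact ne_of_gt hx : Set.Ioi (0:ℝ) ⊆ {(0:ℝ)}ᶜ))
    have : (fun t => (f (p + t • v) - f p) / t) = slope (fun t : ℝ => f (p + t • v)) 0 := by
      funext t
      simp [slope_def_field]
    rw [this]
    exact h1
  refine ge_of_tendsto htend ?_
  filter_upwards [Ioo_mem_nhdsGT_of_mem (Set.mem_Ico.2 ⟨le_refl 0, one_pos⟩)] with t ht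
  exact hslope t ht

theorem stmt1 (n : ℕ) (hn : 2 ≤ n)
    (U : Set (Fin n → ℝ)) (hU : IsOpen U) (hSU : openSimplex n ⊆ U)
    (φ : (Fin n → ℝ) → ℝ) (hφ : ContDiffOn ℝ (⊤ : ℕ∞) φ U)
    (hconc : ConcaveOn ℝ (openSimplex n) (fun p => exp (φ p))) :
    ∀ p ∈ openSimplex n, ∀ q ∈ openSimplex n,
      0 < ∑ i, port n φ p i * q i / p i ∧
      Real.log (∑ i, port n φ p i * q i / p i) = φ q - φ p + LDiv n φ q p := by
  intro p hp q hq
  set L := fderiv ℝ φ p with hL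
  -- differentiability of φ at p
  have hdφ : HasFDerivAt φ L p :=
    ((hφ.contDiffAt (hU.mem_nhds (hSU hp))).differentiableAt (by simp)).hasFDerivAt
  -- the algebraic identity
  have hq_eq : q = ∑ i, q i • (Pi.single i 1 : Fin n → ℝ) := by
    funext j
    rw [Finset.sum_apply]
    simp [Pi.single_apply]
  have hLq : L q = ∑ i, q i * L (Pi.single i 1) := by
    conv_lhs => rw [hq_eq]
    rw [map_sum]
    simp [smul_eq_mul]
  have hsum : ∑ i, port n φ p i * q i / p i = 1 + L (q - p) := by
    have h1 : ∀ i ∈ Finset.univ, port n φ p i * q i / p i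
        = q i * 1 + q i * L (Pi.single i 1) - q i * L p := by
      intro i _
      have hpi : p i ≠ 0 := (hp.1 i).1.ne'
      unfold port
      rw [← hL, map_sub]
      field_simp
      ring
    rw [Finset.sum_congr rfl h1]
    rw [Finset.sum_sub_distrib, Finset.sum_add_distrib, ← Finset.sum_mul, ← Finset.sum_mul]
    rw [map_sub, ← hLq]
    simp [hq.2]
    ring
  -- positivity via concavity of exp ∘ φ
  have hΦ : HasFDerivAt (fun x => exp (φ x)) (exp (φ p) • L) p := hdφ.exp
  have hineq := concave_grad_ineq hconc hp hq hΦ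
  simp only [ContinuousLinearMap.coe_smul', Pi.smul_apply, smul_eq_mul] at hineq
  have hpos : 0 < 1 + L (q - p) := by
    have h1 : (0:ℝ) < exp (φ q) := exp_pos _
    have h2 : (0:ℝ) < exp (φ p) := exp_pos _
    nlinarith [hineq]
  constructor
  · rw [hsum]; exact hpos
  · rw [hsum]
    unfold LDiv
    rw [← hL]
    ring
end

section
/- (Multiplicative decomposition, Fernholz's formula in discrete time.) Let n ≥ 2, let φ be smooth on an open neighborhood of Δ_n with e^φ concave on Δ_n, let π be the portfolio map multiplicatively generated by φ, and let μ: ℕ → Δ_n be any market sequence. Define the value process V(t) = V(0) · Π_{s=0}^{t−1} (Σ_{i=1}^n π_i(μ(s)) μ_i(s+1)/μ_i(s)) with V(0) > 0. Then for every t ≥ 0, log V(t) − log V(0) = φ(μ(t)) − φ(μ(0)) + Σ_{s=0}^{t−1} D_{L,φ}[μ(s+1) | μ(s)]. -/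
open Real Finset

lemma sum_port_eq (n : ℕ) (φ : (Fin n → ℝ) → ℝ) (p q : Fin n → ℝ)
    (hp : ∀ i, p i ≠ 0) (hq : ∑ i, q i = 1) :
    ∑ i, port n φ p i * q i / p i = 1 + fderiv ℝ φ p (q - p) := by
  have h1 : ∀ i, port n φ p i * q i / p i
      = q i + q i * (fderiv ℝ φ p (Pi.single i 1 - p)) := by
    intro i
    rw [div_eq_iff (hp i), port]
    ring
  simp only [h1]
  rw [Finset.sum_add_distrib]
  have h2 : ∑ i, q i * (fderiv ℝ φ p (Pi.single i 1 - p))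
      = fderiv ℝ φ p (∑ i, q i • ((Pi.single i 1 : Fin n → ℝ) - p)) := by
    rw [map_sum]
    simp [smul_eq_mul]
  rw [hq, h2]
  congr 2
  have h3 : ∑ i, q i • ((Pi.single i 1 : Fin n → ℝ) - p) = (∑ i, q i • (Pi.single i 1 : Fin n → ℝ)) - (∑ i, q i) • p := by
    rw [Finset.sum_smul, ← Finset.sum_sub_distrib]
    congr 1
    ext i j
    simp [smul_sub, mul_sub]
  rw [h3, hq, one_smul]
  congr 1
  ext j
  simp [Pi.single_apply, Finset.sum_apply]

lemma factor_pos (n : ℕ)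
    (U : Set (Fin n → ℝ)) (hU : IsOpen U) (hSU : openSimplex n ⊆ U)
    (φ : (Fin n → ℝ) → ℝ) (hφ : ContDiffOn ℝ (⊤ : ℕ∞) φ U)
    (hconc : ConcaveOn ℝ (openSimplex n) (fun p => exp (φ p)))
    (p q : Fin n → ℝ) (hp : p ∈ openSimplex n) (hq : q ∈ openSimplex n) :
    0 < 1 + fderiv ℝ φ p (q - p) := by
  set L : ℝ →ᵃ[ℝ] (Fin n → ℝ) := AffineMap.lineMap p q with hL
  have hL0 : L 0 = p := AffineMap.lineMap_apply_zero p q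
  have hL1 : L 1 = q := AffineMap.lineMap_apply_one p q
  have hdφ : DifferentiableAt ℝ φ p := by
    have := (hφ.contDiffAt (hU.mem_nhds (hSU hp)))
    exact this.differentiableAt (by simp)
  -- derivative of L at 0 is q - p
  have hLd : HasDerivAt (fun t : ℝ => L t) (q - p) 0 := by
    have : (fun t : ℝ => L t) = fun t : ℝ => t • (q - p) + p := by
      ext t j; simp [hL, AffineMap.lineMap_apply_module]; ring
    rw [this]
    simpa using ((hasDerivAt_id (0:ℝ)).smul_const (q - p)).add_const p
  have hcomp : HasDerivAt (fun t : ℝ => φ (L t)) (fderiv ℝ φ p (q - p)) 0 := by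
    have h : HasFDerivAt φ (fderiv ℝ φ p) (L 0) := by rw [hL0]; exact hdφ.hasFDerivAt
    exact h.comp_hasDerivAt 0 hLd
  have hg : HasDerivAt (fun t : ℝ => exp (φ (L t)))
      (exp (φ p) * fderiv ℝ φ p (q - p)) 0 := by
    have := hcomp.exp
    simpa [hL0, mul_comm] using this
  have hconcL : ConcaveOn ℝ (L ⁻¹' openSimplex n) (fun t => exp (φ (L t))) :=
    hconc.comp_affineMap L
  have h0 : (0:ℝ) ∈ L ⁻¹' openSimplex n := by simp [Set.mem_preimage, hL0, hp]
  have h1 : (1:ℝ) ∈ L ⁻¹' openSimplex n := by simp [Set.mem_preimage, hL1, hq]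
  have hslope := hconcL.slope_le_of_hasDerivAt h0 h1 one_pos hg
  have hs : slope (fun t => exp (φ (L t))) 0 1 = exp (φ q) - exp (φ p) := by
    simp [slope_def_field, hL0, hL1]
  rw [hs] at hslope
  have hexp : 0 < exp (φ p) := exp_pos _
  nlinarith [exp_pos (φ q)]

/-- Multiplicative decomposition (Fernholz's formula in discrete time). -/
theorem stmt2 (n : ℕ) (hn : 2 ≤ n)
    (U : Set (Fin n → ℝ)) (hU : IsOpen U) (hSU : openSimplex n ⊆ U)
    (φ : (Fin n → ℝ) → ℝ) (hφ : ContDiffOn ℝ (⊤ : ℕ∞) φ U)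
    (hconc : ConcaveOn ℝ (openSimplex n) (fun p => exp (φ p)))
    (μ : ℕ → (Fin n → ℝ)) (hμ : ∀ t, μ t ∈ openSimplex n)
    (V : ℕ → ℝ) (hV0 : 0 < V 0)
    (hV : ∀ t, V t = V 0 * ∏ s ∈ Finset.range t,
      ∑ i, port n φ (μ s) i * μ (s + 1) i / μ s i) :
    ∀ t, Real.log (V t) - Real.log (V 0) =
      φ (μ t) - φ (μ 0) + ∑ s ∈ Finset.range t, LDiv n φ (μ (s + 1)) (μ s) := by
  have hfac : ∀ s, ∑ i, port n φ (μ s) i * μ (s + 1) i / μ s i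
      = 1 + fderiv ℝ φ (μ s) (μ (s + 1) - μ s) := fun s =>
    sum_port_eq n φ (μ s) (μ (s+1)) (fun i => ((hμ s).1 i).1.ne') (hμ (s+1)).2
  have hpos : ∀ s, 0 < 1 + fderiv ℝ φ (μ s) (μ (s + 1) - μ s) := fun s =>
    factor_pos n U hU hSU φ hφ hconc (μ s) (μ (s+1)) (hμ s) (hμ (s+1))
  have hVpos : ∀ t, 0 < V t := by
    intro t
    rw [hV t]
    apply mul_pos hV0
    apply Finset.prod_pos
    intro s _
    rw [hfac s]
    exact hpos s
  intro t
  induction t with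
  | zero => simp
  | succ t ih =>
    have hstep : V (t + 1) = V t * (1 + fderiv ℝ φ (μ t) (μ (t + 1) - μ t)) := by
      rw [hV (t+1), hV t, Finset.prod_range_succ, hfac t, mul_assoc]
    rw [hstep, Real.log_mul (hVpos t).ne' (hpos t).ne', Finset.sum_range_succ]
    rw [LDiv]
    have := ih
    ring_nf
    ring_nf at this
    linarith
end

section
/- (Lemma 3.4: additively generated strategies are self-financing.) Let n ≥ 2, let φ be smooth and concave on an open neighborhood of Δ_n, and let μ: ℕ → Δ_n be any market sequence. Fix V(0) ∈ ℝ and define recursively η_i(t) = ∂_iφ(μ(t)) − μ(t)·∇φ(μ(t)) + V(t) for i = 1,…,n and V(t+1) = Σ_{i=1}^n η_i(t) μ_i(t+1). Then η is self-financing: Σ_{i=1}^n η_i(t) μ_i(t+1) = Σ_{i=1}^n η_i(t+1) μ_i(t+1) for all t, and V(t) = V(0) + Σ_{s=0}^{t−1} η(s)·(μ(s+1) − μ(s)). -/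
open Real Finset

lemma key_lin {n : ℕ} (L : (Fin n → ℝ) →L[ℝ] ℝ) (p q : Fin n → ℝ) (hp : ∑ i, p i = 1) :
    ∑ i, p i * L (Pi.single i 1 - q) = L (p - q) := by
  have h1 : ∀ i, p i * L (Pi.single i 1 - q) = L (Pi.single i (p i)) - p i * L q := by
    intro i
    rw [map_sub]
    have : L (Pi.single i (p i)) = p i * L (Pi.single i 1) := by
      have : Pi.single i (p i) = p i • (Pi.single i 1 : Fin n → ℝ) := by
        ext j
        by_cases h : j = i <;> simp [Pi.single_apply, h]
      rw [this, map_smul, smul_eq_mul]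
    rw [this]; ring
  rw [Finset.sum_congr rfl (fun i _ => h1 i), Finset.sum_sub_distrib, ← Finset.sum_mul, hp,
    ← map_sum, Finset.univ_sum_single, map_sub, one_mul]

/-- Additively generated strategies are self-financing. -/
theorem stmt5 (n : ℕ) (hn : 2 ≤ n)
    (U : Set (Fin n → ℝ)) (hU : IsOpen U) (hSU : openSimplex n ⊆ U)
    (φ : (Fin n → ℝ) → ℝ) (hφ : ContDiffOn ℝ (⊤ : ℕ∞) φ U) (hconc : ConcaveOn ℝ U φ)
    (μ : ℕ → (Fin n → ℝ)) (hμ : ∀ t, μ t ∈ openSimplex n)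
    (η : ℕ → Fin n → ℝ) (V : ℕ → ℝ)
    (hη : ∀ t i, η t i = fderiv ℝ φ (μ t) (Pi.single i 1 - μ t) + V t)
    (hV : ∀ t, V (t + 1) = ∑ i, η t i * μ (t + 1) i) :
    (∀ t, ∑ i, η t i * μ (t + 1) i = ∑ i, η (t + 1) i * μ (t + 1) i) ∧
    (∀ t, V t = V 0 + ∑ s ∈ Finset.range t, ∑ i, η s i * (μ (s + 1) i - μ s i)) := by
  have key : ∀ t u : ℕ, ∑ i, η t i * μ u i
      = fderiv ℝ φ (μ t) (μ u - μ t) + V t := by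
    intro t u
    have hsum : ∑ i, μ u i = 1 := (hμ u).2
    calc ∑ i, η t i * μ u i
        = ∑ i, (μ u i * fderiv ℝ φ (μ t) (Pi.single i 1 - μ t) + μ u i * V t) := by
          refine Finset.sum_congr rfl fun i _ => ?_
          rw [hη t i]; ring
      _ = fderiv ℝ φ (μ t) (μ u - μ t) + V t := by
          rw [Finset.sum_add_distrib, key_lin _ _ _ hsum, ← Finset.sum_mul, hsum, one_mul]
  have step : ∀ t, V (t + 1) = V t + ∑ i, η t i * (μ (t + 1) i - μ t i) := by
    intro t
    have h1 : ∑ i, η t i * (μ (t + 1) i - μ t i)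
        = (∑ i, η t i * μ (t + 1) i) - ∑ i, η t i * μ t i := by
      rw [← Finset.sum_sub_distrib]; exact Finset.sum_congr rfl fun i _ => by ring
    rw [h1, hV t, key t t, sub_self, map_zero, zero_add]; ring
  constructor
  · intro t
    rw [key (t+1) (t+1), sub_self, map_zero, zero_add, ← hV t]
  · intro t
    induction t with
    | zero => simp
    | succ t ih =>
      rw [step t, ih, Finset.sum_range_succ]; ring
end

section
/- (Theorem 3.7: additive decomposition.) Let n ≥ 2, let φ be smooth and concave on an open neighborhood of Δ_n, and let μ: ℕ → Δ_n be any market sequence. Let η be the additively generated strategy: η_i(t) = ∂_iφ(μ(t)) − μ(t)·∇φ(μ(t)) + V(t) with V(t+1) = Σ_i η_i(t)μ_i(t+1) and V(0) given. Then for every t ≥ 0, V(t) − V(0) = φ(μ(t)) − φ(μ(0)) + Σ_{s=0}^{t−1} D_{B,φ}[μ(s+1) | μ(s)]. -/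
open Real Finset

/-- The Bregman divergence of φ. -/
noncomputable def BDiv (n : ℕ) (φ : (Fin n → ℝ) → ℝ) (q p : Fin n → ℝ) : ℝ :=
  fderiv ℝ φ p (q - p) - (φ q - φ p)

/-- Additive decomposition (Theorem 3.7). -/
theorem stmt6 (n : ℕ) (hn : 2 ≤ n)
    (U : Set (Fin n → ℝ)) (hU : IsOpen U) (hSU : openSimplex n ⊆ U)
    (φ : (Fin n → ℝ) → ℝ) (hφ : ContDiffOn ℝ (⊤ : ℕ∞) φ U) (hconc : ConcaveOn ℝ U φ)
    (μ : ℕ → (Fin n → ℝ)) (hμ : ∀ t, μ t ∈ openSimplex n)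
    (η : ℕ → Fin n → ℝ) (V : ℕ → ℝ)
    (hη : ∀ t i, η t i = fderiv ℝ φ (μ t) (Pi.single i 1 - μ t) + V t)
    (hV : ∀ t, V (t + 1) = ∑ i, η t i * μ (t + 1) i) :
    ∀ t, V t - V 0 =
      φ (μ t) - φ (μ 0) + ∑ s ∈ Finset.range t, BDiv n φ (μ (s + 1)) (μ s) := by
  intro t
  induction t with
  | zero => simp
  | succ t ih =>
    have hsum1 : ∑ i, μ (t + 1) i = 1 := (hμ (t + 1)).2
    set L := fderiv ℝ φ (μ t) with hL
    have hrep : μ (t + 1) - μ t = ∑ i, μ (t + 1) i • (Pi.single i 1 - μ t) := by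
      rw [Finset.sum_congr rfl (fun i _ => smul_sub (μ (t + 1) i) _ _),
        Finset.sum_sub_distrib, ← Finset.sum_smul, hsum1, one_smul]
      congr 1
      funext j
      simp [Finset.sum_apply, Pi.single_apply]
    have key : V (t + 1) = L (μ (t + 1) - μ t) + V t := by
      rw [hV t]
      have : ∀ i, η t i * μ (t + 1) i
          = μ (t + 1) i * L (Pi.single i 1 - μ t) + V t * μ (t + 1) i := by
        intro i; rw [hη t i]; ring
      rw [Finset.sum_congr rfl (fun i _ => this i), Finset.sum_add_distrib,
        ← Finset.mul_sum, hsum1, mul_one, hrep, map_sum]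
      congr 1
      exact Finset.sum_congr rfl (fun i _ => (L.map_smul _ _).symm ▸ rfl)
    have hB : BDiv n φ (μ (t + 1)) (μ t)
        = L (μ (t + 1) - μ t) - (φ (μ (t + 1)) - φ (μ t)) := rfl
    rw [Finset.sum_range_succ, hB]
    have := key
    linarith [ih]
end

section
/- (Correction for the defect of self-financibility.) Let n ≥ 2, let μ: ℕ → Δ_n be a market sequence, let η̃: ℕ → ℝ^n be arbitrary, and let C ∈ ℝ. Define Q(t) = η̃(t)·μ(t) − η̃(0)·μ(0) − Σ_{s=0}^{t−1} η̃(s)·(μ(s+1) − μ(s)) and η_i(t) = η̃_i(t) − Q(t) − C. Then η is self-financing, i.e. Σ_i η_i(t)μ_i(t+1) = Σ_i η_i(t+1)μ_i(t+1) for all t, and moreover η(t)·(μ(t+1) − μ(t)) = η̃(t)·(μ(t+1) − μ(t)) for all t. -/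
open Finset

/-- Correction for the defect of self-financibility. -/
theorem stmt7 (n : ℕ) (hn : 2 ≤ n)
    (μ : ℕ → (Fin n → ℝ)) (hμ : ∀ t, μ t ∈ openSimplex n)
    (ηt : ℕ → Fin n → ℝ) (C : ℝ)
    (Q : ℕ → ℝ)
    (hQ : ∀ t, Q t = ∑ i, ηt t i * μ t i - ∑ i, ηt 0 i * μ 0 i -
      ∑ s ∈ Finset.range t, ∑ i, ηt s i * (μ (s + 1) i - μ s i))
    (η : ℕ → Fin n → ℝ)
    (hη : ∀ t i, η t i = ηt t i - Q t - C) :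
    (∀ t, ∑ i, η t i * μ (t + 1) i = ∑ i, η (t + 1) i * μ (t + 1) i) ∧
    (∀ t, ∑ i, η t i * (μ (t + 1) i - μ t i) =
      ∑ i, ηt t i * (μ (t + 1) i - μ t i)) := by
  have hsum : ∀ t, ∑ i, μ t i = 1 := fun t => (hμ t).2
  have hdiff : ∀ t, ∑ i, ηt t i * (μ (t + 1) i - μ t i) =
      ∑ i, ηt t i * μ (t + 1) i - ∑ i, ηt t i * μ t i := by
    intro t
    rw [← Finset.sum_sub_distrib]
    exact Finset.sum_congr rfl fun i _ => by ring
  constructor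
  · intro t
    have e1 : ∑ i, η t i * μ (t + 1) i =
        ∑ i, ηt t i * μ (t + 1) i - (Q t + C) := by
      simp only [hη, sub_mul, Finset.sum_sub_distrib, ← Finset.mul_sum, hsum, mul_one]
      ring
    have e2 : ∑ i, η (t + 1) i * μ (t + 1) i =
        ∑ i, ηt (t + 1) i * μ (t + 1) i - (Q (t + 1) + C) := by
      simp only [hη, sub_mul, Finset.sum_sub_distrib, ← Finset.mul_sum, hsum, mul_one]
      ring
    have hQs : Q (t + 1) = Q t + ∑ i, ηt (t + 1) i * μ (t + 1) i -
        ∑ i, ηt t i * μ (t + 1) i := by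
      rw [hQ (t + 1), hQ t, Finset.sum_range_succ, hdiff t]
      ring
    rw [e1, e2, hQs]; ring
  · intro t
    have hz : ∑ i, (μ (t + 1) i - μ t i) = 0 := by
      rw [Finset.sum_sub_distrib, hsum, hsum]; ring
    simp only [hη, sub_mul, Finset.sum_sub_distrib, ← Finset.mul_sum, hz, mul_zero]
    ring
end

section
/- (Theorem 4.1(i): multiplicative generation and optimal transport with logarithmic cost.) Let n ≥ 2, let φ be smooth on an open neighborhood of Δ_n with e^φ concave and strictly positive on Δ_n, and let π be the portfolio map multiplicatively generated by φ. Then for every p ∈ Δ_n, π_i(p) ≥ 0 for all i and Σ_{j=1}^n π_j(p)/p_j > 0, so the map T: Δ_n → closure(Δ_n), T_i(p) = (π_i(p)/p_i)/(Σ_{j=1}^n π_j(p)/p_j), is well defined; and the graph of T is cyclically monotone for the cost c(p,q) = log(p·q): for every m ≥ 1 and p_1, …, p_m ∈ Δ_n with p_{m+1} := p_1, Σ_{k=1}^m log(p_k · T(p_k)) ≤ Σ_{k=1}^m log(p_{k+1} · T(p_k)). -/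
open Real Finset

/-- The transport map associated with the multiplicatively generated portfolio. -/
noncomputable def transportMap (n : ℕ) (φ : (Fin n → ℝ) → ℝ) (p : Fin n → ℝ)
    (i : Fin n) : ℝ :=
  (port n φ p i / p i) / ∑ j, port n φ p j / p j

private lemma mem_openSimplex_of (n : ℕ) (hn : 2 ≤ n) (x : Fin n → ℝ)
    (h0 : ∀ i, 0 < x i) (hs : ∑ i, x i = 1) : x ∈ openSimplex n := by
  refine ⟨fun i => ⟨h0 i, ?_⟩, hs⟩
  have hmem : i ∈ Finset.univ := Finset.mem_univ i
  have hsplit : x i + ∑ j ∈ Finset.univ.erase i, x j = 1 := by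
    rw [Finset.add_sum_erase _ _ hmem, hs]
  have hne : (Finset.univ.erase i).Nonempty := by
    rw [← Finset.card_pos, Finset.card_erase_of_mem hmem, Finset.card_univ, Fintype.card_fin]
    omega
  have hpos : 0 < ∑ j ∈ Finset.univ.erase i, x j :=
    Finset.sum_pos (fun j _ => h0 j) hne
  linarith

private lemma sum_single (n : ℕ) (i : Fin n) : ∑ j, (Pi.single i (1:ℝ)) j = 1 := by
  simp [Pi.single_apply]

private lemma sum_weighted (n : ℕ) (L : (Fin n → ℝ) →L[ℝ] ℝ) (p q : Fin n → ℝ)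
    (hq : ∑ i, q i = 1) :
    ∑ i, q i * (1 + L (Pi.single i 1 - p)) = 1 + L (q - p) := by
  have h1 : ∑ i, q i • (Pi.single i (1:ℝ) - p) = q - p := by
    funext j
    simp only [Finset.sum_apply, Pi.smul_apply, Pi.sub_apply, smul_eq_mul, mul_sub,
      Finset.sum_sub_distrib, Pi.single_apply, mul_ite, mul_one, mul_zero,
      Finset.sum_ite_eq, Finset.mem_univ, if_true, ← Finset.sum_mul, hq, one_mul]
  calc ∑ i, q i * (1 + L (Pi.single i 1 - p))
      = ∑ i, q i + ∑ i, q i * L (Pi.single i 1 - p) := by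
        rw [← Finset.sum_add_distrib]; congr 1; funext i; ring
    _ = 1 + L (q - p) := by
        rw [hq]
        congr 1
        rw [← h1, map_sum]
        congr 1; funext i
        rw [map_smul, smul_eq_mul]

private lemma grad_ineq (n : ℕ) (U : Set (Fin n → ℝ)) (hU : IsOpen U)
    (hSU : openSimplex n ⊆ U)
    (φ : (Fin n → ℝ) → ℝ) (hφ : ContDiffOn ℝ (⊤ : ℕ∞) φ U)
    (hconc : ConcaveOn ℝ (openSimplex n) (fun p => exp (φ p)))
    {p q : Fin n → ℝ} (hp : p ∈ openSimplex n) (hq : q ∈ openSimplex n) :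
    exp (φ q) ≤ exp (φ p) * (1 + fderiv ℝ φ p (q - p)) := by
  have hdφ : DifferentiableAt ℝ φ p :=
    (hφ.contDiffAt (hU.mem_nhds (hSU hp))).differentiableAt (by simp)
  have hF : HasFDerivAt (fun x => exp (φ x)) (exp (φ p) • fderiv ℝ φ p) p :=
    hdφ.hasFDerivAt.exp
  set γ : ℝ → (Fin n → ℝ) := fun t => p + t • (q - p) with hγdef
  have hγ0 : γ 0 = p := by simp [hγdef]
  have hγ1 : γ 1 = q := by simp [hγdef]
  have hγ : HasDerivAt γ (q - p) 0 := by
    simpa [hγdef] using ((hasDerivAt_id (0:ℝ)).smul_const (q - p)).const_add p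
  set g : ℝ → ℝ := fun t => exp (φ (γ t)) with hgdef
  have hg : HasDerivAt g (exp (φ p) * (fderiv ℝ φ p (q - p))) 0 := by
    have hF' : HasFDerivAt (fun x => exp (φ x)) (exp (φ p) • fderiv ℝ φ p) (γ 0) :=
      hγ0 ▸ hF
    have := hF'.comp_hasDerivAt 0 hγ
    exact this
  have hconcav : ∀ t ∈ Set.Ioo (0:ℝ) 1, g 1 - g 0 ≤ slope g 0 t := by
    intro t ht
    have hcomb : γ t = (1 - t) • p + t • q := by
      funext j
      simp only [hγdef, Pi.add_apply, Pi.smul_apply, Pi.sub_apply, smul_eq_mul]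
      ring
    have := hconc.2 hp hq (by linarith [ht.2] : (0:ℝ) ≤ 1 - t) (le_of_lt ht.1) (by ring)
    rw [← hcomb] at this
    have hgt : (1 - t) * g 0 + t * g 1 ≤ g t := by
      simpa [hgdef, hγ0, hγ1, smul_eq_mul] using this
    rw [slope_def_field, sub_zero, le_div_iff₀ ht.1]
    nlinarith
  have htend : Filter.Tendsto (slope g 0) (nhdsWithin 0 (Set.Ioi 0))
      (nhds (exp (φ p) * (fderiv ℝ φ p (q - p)))) :=
    (hasDerivAt_iff_tendsto_slope.mp hg).mono_left
      (nhdsWithin_mono 0 (fun x hx => ne_of_gt hx))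
  have hkey : g 1 - g 0 ≤ exp (φ p) * (fderiv ℝ φ p (q - p)) := by
    refine ge_of_tendsto htend ?_
    filter_upwards [Ioo_mem_nhdsGT one_pos] with t ht
    exact hconcav t ht
  have hg0 : g 0 = exp (φ p) := by rw [hgdef]; simp [hγ0]
  have hg1 : g 1 = exp (φ q) := by rw [hgdef]; simp [hγ1]
  rw [hg0, hg1] at hkey
  nlinarith [exp_pos (φ p)]

private lemma mem_closure_simplex (n : ℕ) (hn : 2 ≤ n) (x : Fin n → ℝ)
    (h0 : ∀ i, 0 ≤ x i) (hs : ∑ i, x i = 1) : x ∈ closure (openSimplex n) := by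
  have hn0 : (0:ℝ) < n := by positivity
  set c : Fin n → ℝ := fun _ => 1 / n with hc
  have hsc : ∑ _i : Fin n, (1:ℝ) / n = 1 := by
    rw [Finset.sum_const, Finset.card_univ, Fintype.card_fin, nsmul_eq_mul]
    field_simp
  have hf : Filter.Tendsto (fun t : ℝ => x + t • (c - x)) (nhdsWithin 0 (Set.Ioi 0))
      (nhds x) := by
    have hcont : ContinuousAt (fun t : ℝ => x + t • (c - x)) 0 := by fun_prop
    have := hcont.tendsto
    simp only [zero_smul, add_zero] at this
    exact this.mono_left nhdsWithin_le_nhds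
  refine mem_closure_of_tendsto hf ?_
  filter_upwards [Ioo_mem_nhdsGT one_pos] with t ht
  refine mem_openSimplex_of n hn _ (fun i => ?_) ?_
  · have := h0 i
    have : 0 ≤ (1 - t) * x i := by nlinarith [ht.2]
    simp only [Pi.add_apply, Pi.smul_apply, Pi.sub_apply, smul_eq_mul, hc]
    have h1n : 0 < (1:ℝ)/n := by positivity
    nlinarith [ht.1]
  · simp only [Pi.add_apply, Pi.smul_apply, Pi.sub_apply, smul_eq_mul]
    rw [Finset.sum_add_distrib, hs, ← Finset.mul_sum]
    rw [Finset.sum_sub_distrib, hs, hc]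
    rw [hsc]
    ring

/-- Multiplicative generation and optimal transport with logarithmic cost
c(p,q) = log(p·q): the graph of T is c-cyclically monotone. -/
theorem stmt8 (n : ℕ) (hn : 2 ≤ n)
    (U : Set (Fin n → ℝ)) (hU : IsOpen U) (hSU : openSimplex n ⊆ U)
    (φ : (Fin n → ℝ) → ℝ) (hφ : ContDiffOn ℝ (⊤ : ℕ∞) φ U)
    (hconc : ConcaveOn ℝ (openSimplex n) (fun p => exp (φ p)))
    (hpos : ∀ p ∈ openSimplex n, 0 < exp (φ p)) :
    (∀ p ∈ openSimplex n,
      (∀ i, 0 ≤ port n φ p i) ∧ 0 < ∑ j, port n φ p j / p j ∧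
      transportMap n φ p ∈ closure (openSimplex n)) ∧
    (∀ m : ℕ, 1 ≤ m → ∀ p : ℕ → (Fin n → ℝ),
      (∀ k, p k ∈ openSimplex n) → p m = p 0 →
      ∑ k ∈ Finset.range m, Real.log (∑ i, p k i * transportMap n φ (p k) i) ≤
      ∑ k ∈ Finset.range m, Real.log (∑ i, p (k + 1) i * transportMap n φ (p k) i)) := by
  -- notation
  set L : (Fin n → ℝ) → ((Fin n → ℝ) →L[ℝ] ℝ) := fun p => fderiv ℝ φ p with hL
  -- c-values nonnegative
  have hcnn : ∀ p ∈ openSimplex n, ∀ i, 0 ≤ 1 + L p (Pi.single i 1 - p) := by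
    intro p hp i
    have key : ∀ t : ℝ, t ∈ Set.Ioo (0:ℝ) 1 → 0 < 1 + t * L p (Pi.single i 1 - p) := by
      intro t ht
      have hmem : (p + t • (Pi.single i 1 - p)) ∈ openSimplex n := by
        refine mem_openSimplex_of n hn _ (fun j => ?_) ?_
        · simp only [Pi.add_apply, Pi.smul_apply, Pi.sub_apply, smul_eq_mul,
            Pi.single_apply]
          by_cases hji : j = i
          · subst hji
            simp only [if_pos rfl, if_true]
            nlinarith [ht.1, ht.2, (hp.1 j).1, (hp.1 j).2]
          · simp only [if_neg hji]
            nlinarith [ht.2, (hp.1 j).1]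
        · simp only [Pi.add_apply, Pi.smul_apply, Pi.sub_apply, smul_eq_mul]
          rw [Finset.sum_add_distrib, hp.2, ← Finset.mul_sum, Finset.sum_sub_distrib,
            hp.2, sum_single]
          ring
      have hgi := grad_ineq n U hU hSU φ hφ hconc hp hmem
      have hsub : (p + t • (Pi.single i 1 - p)) - p = t • (Pi.single i 1 - p) := by
        abel
      rw [hsub, map_smul, smul_eq_mul] at hgi
      nlinarith [exp_pos (φ (p + t • (Pi.single i 1 - p))), exp_pos (φ p)]
    have htend : Filter.Tendsto (fun t : ℝ => 1 + t * L p (Pi.single i 1 - p))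
        (nhdsWithin 1 (Set.Iio 1)) (nhds (1 + 1 * L p (Pi.single i 1 - p))) := by
      have hcont : ContinuousAt (fun t : ℝ => 1 + t * L p (Pi.single i 1 - p)) 1 := by
        fun_prop
      exact hcont.tendsto.mono_left nhdsWithin_le_nhds
    have := ge_of_tendsto htend (by
      filter_upwards [Ioo_mem_nhdsLT one_pos] with t ht
      exact le_of_lt (key t ht))
    simpa using this
  -- sum identity
  have hsumw : ∀ p ∈ openSimplex n, ∀ q : Fin n → ℝ, (∑ i, q i = 1) →
      ∑ i, q i * (1 + L p (Pi.single i 1 - p)) = 1 + L p (q - p) := by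
    intro p _ q hq1
    exact sum_weighted n (L p) p q hq1
  -- S ≥ 1
  have hS1 : ∀ p ∈ openSimplex n, 1 ≤ ∑ i, (1 + L p (Pi.single i 1 - p)) := by
    intro p hp
    have h1 : ∑ i, p i * (1 + L p (Pi.single i 1 - p)) = 1 := by
      rw [hsumw p hp p hp.2]; simp
    calc (1:ℝ) = ∑ i, p i * (1 + L p (Pi.single i 1 - p)) := h1.symm
      _ ≤ ∑ i, (1 + L p (Pi.single i 1 - p)) := by
          refine Finset.sum_le_sum (fun i _ => ?_)
          exact mul_le_of_le_one_left (hcnn p hp i) (le_of_lt (hp.1 i).2)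
  -- port/p = c
  have hportdiv : ∀ p ∈ openSimplex n, ∀ i,
      port n φ p i / p i = 1 + L p (Pi.single i 1 - p) := by
    intro p hp i
    rw [port, mul_comm, mul_div_assoc, div_self (ne_of_gt (hp.1 i).1), mul_one]
  have hSsum : ∀ p ∈ openSimplex n,
      ∑ j, port n φ p j / p j = ∑ i, (1 + L p (Pi.single i 1 - p)) := by
    intro p hp
    exact Finset.sum_congr rfl (fun j _ => hportdiv p hp j)
  have hSpos : ∀ p ∈ openSimplex n, 0 < ∑ j, port n φ p j / p j := by
    intro p hp
    rw [hSsum p hp]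
    linarith [hS1 p hp]
  -- transportMap formula
  have hT : ∀ p ∈ openSimplex n, ∀ i, transportMap n φ p i =
      (1 + L p (Pi.single i 1 - p)) / ∑ j, (1 + L p (Pi.single j 1 - p)) := by
    intro p hp i
    rw [transportMap, hportdiv p hp i, hSsum p hp]
  -- dot products
  have hdot : ∀ p ∈ openSimplex n, ∀ q : Fin n → ℝ, (∑ i, q i = 1) →
      ∑ i, q i * transportMap n φ p i =
      (1 + L p (q - p)) / ∑ j, (1 + L p (Pi.single j 1 - p)) := by
    intro p hp q hq1
    rw [← hsumw p hp q hq1, Finset.sum_div]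
    refine Finset.sum_congr rfl (fun i _ => ?_)
    rw [hT p hp i, mul_div_assoc]
  constructor
  · intro p hp
    refine ⟨fun i => ?_, hSpos p hp, ?_⟩
    · rw [port]
      exact mul_nonneg (le_of_lt (hp.1 i).1) (hcnn p hp i)
    · have hS1' := hS1 p hp
      refine mem_closure_simplex n hn _ (fun i => ?_) ?_
      · rw [hT p hp i]
        exact div_nonneg (hcnn p hp i) (by linarith)
      · rw [Finset.sum_congr rfl (fun i _ => hT p hp i), ← Finset.sum_div]
        exact div_self (by linarith)
  · -- cyclic monotonicity
    intro m hm p hp hcyc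
    -- key pairwise inequality
    have hpair : ∀ k : ℕ,
        Real.log (∑ i, p k i * transportMap n φ (p k) i) ≤
        Real.log (∑ i, p (k+1) i * transportMap n φ (p k) i) + φ (p k) - φ (p (k+1)) := by
      intro k
      have hpk := hp k
      have hpk1 := hp (k+1)
      set S := ∑ j, (1 + L (p k) (Pi.single j 1 - p k)) with hSdef
      have hS1' := hS1 (p k) hpk
      have hSpos' : (0:ℝ) < S := by rw [hSdef]; linarith
      have hd1 : ∑ i, p k i * transportMap n φ (p k) i = 1 / S := by
        rw [hdot (p k) hpk (p k) hpk.2]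
        simp [hSdef]
      have hd2 : ∑ i, p (k+1) i * transportMap n φ (p k) i
          = (1 + L (p k) (p (k+1) - p k)) / S := hdot (p k) hpk (p (k+1)) hpk1.2
      have hgi := grad_ineq n U hU hSU φ hφ hconc hpk hpk1
      have hXpos : 0 < 1 + L (p k) (p (k+1) - p k) := by
        nlinarith [exp_pos (φ (p (k+1))), exp_pos (φ (p k))]
      have hlog : φ (p (k+1)) - φ (p k) ≤ Real.log (1 + L (p k) (p (k+1) - p k)) := by
        have := Real.log_le_log (exp_pos (φ (p (k+1)))) hgi
        rw [Real.log_exp, Real.log_mul (ne_of_gt (exp_pos (φ (p k)))) (ne_of_gt hXpos),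
          Real.log_exp] at this
        linarith
      rw [hd1, hd2, Real.log_div (ne_of_gt hXpos) (ne_of_gt hSpos'), one_div,
        Real.log_inv]
      linarith
    calc ∑ k ∈ Finset.range m, Real.log (∑ i, p k i * transportMap n φ (p k) i)
        ≤ ∑ k ∈ Finset.range m,
            (Real.log (∑ i, p (k+1) i * transportMap n φ (p k) i) + φ (p k) - φ (p (k+1))) :=
          Finset.sum_le_sum (fun k _ => hpair k)
      _ = (∑ k ∈ Finset.range m,
            Real.log (∑ i, p (k+1) i * transportMap n φ (p k) i))
          + ∑ k ∈ Finset.range m, (φ (p k) - φ (p (k+1))) := by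
          rw [← Finset.sum_add_distrib]; congr 1; funext k; ring
      _ = ∑ k ∈ Finset.range m,
            Real.log (∑ i, p (k+1) i * transportMap n φ (p k) i) := by
          rw [Finset.sum_range_sub' (fun k => φ (p k)), hcyc]
          ring
end

section
/- (Lemma 5.2: the trading strategy of a functionally generated portfolio is a scaled gradient.) Let n ≥ 2, let g be smooth with g' > 0 on an open interval I, let φ be smooth on an open neighborhood of Δ_n, let p ∈ Δ_n, x ∈ I, and η ∈ ℝ^n. Suppose D: Δ_n × Δ_n → [0,∞) satisfies the quadratic-approximation property D[p + Δp | p] = O(|Δp|²) as Δp → 0, and suppose that for all q ∈ Δ_n in a neighborhood of p we have g(x + η·(q − p)) − g(x) = φ(q) − φ(p) + D[q | p]. Then for every vector v ∈ ℝ^n with v_1 + ⋯ + v_n = 0, η·v = (1/g'(x)) ∇φ(p)·v. -/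
open Finset Asymptotics Filter Topology

/-- Lemma 5.2: the trading strategy of a functionally generated portfolio is a
scaled gradient. -/
theorem stmt11 (n : ℕ) (hn : 2 ≤ n)
    (I : Set ℝ) (hIopen : IsOpen I) (hIconn : I.OrdConnected) (hIne : I.Nonempty)
    (g : ℝ → ℝ) (hg : ContDiffOn ℝ (⊤ : ℕ∞) g I) (hg' : ∀ y ∈ I, 0 < deriv g y)
    (U : Set (Fin n → ℝ)) (hU : IsOpen U) (hSU : openSimplex n ⊆ U)
    (φ : (Fin n → ℝ) → ℝ) (hφ : ContDiffOn ℝ (⊤ : ℕ∞) φ U)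
    (p : Fin n → ℝ) (hp : p ∈ openSimplex n) (x : ℝ) (hx : x ∈ I)
    (η : Fin n → ℝ)
    (D : (Fin n → ℝ) → (Fin n → ℝ) → ℝ)
    (hDnonneg : ∀ q ∈ openSimplex n, ∀ r ∈ openSimplex n, 0 ≤ D q r)
    (hDquad : (fun v : Fin n → ℝ => D (p + v) p) =O[nhdsWithin 0 {v | p + v ∈ openSimplex n}]
      fun v => ‖v‖ ^ 2)
    (ε : ℝ) (hε : 0 < ε)
    (hmain : ∀ q ∈ openSimplex n, dist q p < ε →
      g (x + ∑ i, η i * (q i - p i)) - g x = φ q - φ p + D q p) :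
    ∀ v : Fin n → ℝ, ∑ i, v i = 0 →
      ∑ i, η i * v i = (1 / deriv g x) * fderiv ℝ φ p v := by
  intro v hv
  set a := ∑ i, η i * v i with ha
  have hpU : p ∈ U := hSU hp
  have hφd : DifferentiableAt ℝ φ p :=
    (hφ.differentiableOn (by norm_num)).differentiableAt (hU.mem_nhds hpU)
  have hgd : HasDerivAt g (deriv g x) x :=
    ((hg.differentiableOn (by norm_num)).differentiableAt (hIopen.mem_nhds hx)).hasDerivAt
  -- eventually p + t • v ∈ openSimplex n
  have hmem : ∀ᶠ t : ℝ in 𝓝 0, p + t • v ∈ openSimplex n := by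
    have h1 : ∀ᶠ t : ℝ in 𝓝 0, ∀ i, 0 < (p + t • v) i ∧ (p + t • v) i < 1 := by
      rw [Filter.eventually_all]
      intro i
      have hc : ContinuousAt (fun t : ℝ => p i + t * v i) 0 := by fun_prop
      have hmem0 : Set.Ioo (0 : ℝ) 1 ∈ 𝓝 (p i + 0 * v i) := by
        refine isOpen_Ioo.mem_nhds ?_
        simpa using ⟨(hp.1 i).1, (hp.1 i).2⟩
      filter_upwards [hc.eventually_mem hmem0] with t ht
      simpa [Pi.add_apply, Set.mem_Ioo] using ht
    filter_upwards [h1] with t ht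
    refine ⟨ht, ?_⟩
    simp [Finset.sum_add_distrib, hp.2, ← Finset.mul_sum, hv]
  have hdist : ∀ᶠ t : ℝ in 𝓝 0, dist (p + t • v) p < ε := by
    have hc : ContinuousAt (fun t : ℝ => dist (p + t • v) p) 0 := by fun_prop
    have h0 : dist (p + (0 : ℝ) • v) p = 0 := by simp
    have := hc.eventually_mem (isOpen_Iio.mem_nhds (by simp [h0, hε] : dist (p + (0:ℝ) • v) p ∈ Set.Iio ε))
    simpa using this
  -- key pointwise identity
  have hEq : ∀ᶠ t : ℝ in 𝓝 0,
      g (x + t * a) - g x = φ (p + t • v) - φ p + D (p + t • v) p := by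
    filter_upwards [hmem, hdist] with t htm htd
    have := hmain (p + t • v) htm htd
    have hsum : ∑ i, η i * ((p + t • v) i - p i) = t * a := by
      simp only [Pi.add_apply, Pi.smul_apply, smul_eq_mul, add_sub_cancel_left]
      rw [ha, Finset.mul_sum]
      exact Finset.sum_congr rfl fun i _ => by ring
    rwa [hsum] at this
  -- D p p = 0
  have hDpp : D p p = 0 := by
    have := hmain p hp (by simpa using hε)
    simpa using this.symm
  -- derivative of the error term is 0
  have hE : HasDerivAt (fun t : ℝ => D (p + t • v) p) 0 0 := by
    rw [hasDerivAt_iff_isLittleO]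
    simp only [sub_zero, smul_zero, zero_smul]
    have htend : Tendsto (fun t : ℝ => t • v) (𝓝 0)
        (𝓝[{w | p + w ∈ openSimplex n}] 0) := by
      rw [tendsto_nhdsWithin_iff]
      constructor
      · have : Tendsto (fun t : ℝ => t • v) (𝓝 0) (𝓝 ((0:ℝ) • v)) := by
          exact (continuous_id.smul continuous_const).tendsto 0
        simpa using this
      · exact hmem
    have h1 : (fun t : ℝ => D (p + t • v) p) =O[𝓝 0] fun t => ‖t • v‖ ^ 2 :=
      hDquad.comp_tendsto htend
    have h2 : (fun t : ℝ => ‖t • v‖ ^ 2) =O[𝓝 0] fun t => t ^ 2 := by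
      refine isBigO_iff.2 ⟨‖v‖ ^ 2, ?_⟩
      filter_upwards with t
      have he : ‖t • v‖ ^ 2 = ‖v‖ ^ 2 * t ^ 2 := by
        rw [norm_smul, mul_pow, Real.norm_eq_abs, sq_abs]; ring
      rw [Real.norm_eq_abs, Real.norm_eq_abs, abs_of_nonneg (by positivity), he,
        abs_of_nonneg (sq_nonneg t)]
    have h3 : (fun t : ℝ => t ^ 2) =o[𝓝 0] fun t : ℝ => t := by
      simpa using isLittleO_pow_pow (𝕜 := ℝ) (one_lt_two)
    have := (h1.trans h2).trans_isLittleO h3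
    have h0 : D (p + (0:ℝ) • v) p = 0 := by simpa using hDpp
    refine this.congr' ?_ (by filter_upwards with t; rfl)
    filter_upwards with t
    simp [hDpp]
  -- derivative of LHS
  have hpath : HasDerivAt (fun t : ℝ => x + t * a) a 0 := by
    simpa using ((hasDerivAt_id (0:ℝ)).mul_const a).const_add x
  have hF : HasDerivAt (fun t : ℝ => g (x + t * a) - g x) (deriv g x * a) 0 := by
    have : HasDerivAt (fun t : ℝ => g (x + t * a)) (deriv g x * a) 0 := by
      have hgd' : HasDerivAt g (deriv g x) (x + 0 * a) := by simpa using hgd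
      have := hgd'.comp (0:ℝ) hpath
      exact this
    exact this.sub_const (g x)
  -- derivative of φ term
  have hpath2 : HasDerivAt (fun t : ℝ => p + t • v) v 0 := by
    have := ((hasDerivAt_id (0:ℝ)).smul_const v).const_add p
    simpa using this
  have hG : HasDerivAt (fun t : ℝ => φ (p + t • v) - φ p) ((fderiv ℝ φ p) v) 0 := by
    have hφd' : HasFDerivAt φ (fderiv ℝ φ p) (p + (0:ℝ) • v) := by simpa using hφd.hasFDerivAt
    have := hφd'.comp_hasDerivAt (0:ℝ) hpath2
    exact this.sub_const (φ p)
  have hRHS : HasDerivAt (fun t : ℝ => φ (p + t • v) - φ p + D (p + t • v) p)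
      ((fderiv ℝ φ p) v + 0) 0 := hG.add hE
  have hF' : HasDerivAt (fun t : ℝ => φ (p + t • v) - φ p + D (p + t • v) p)
      (deriv g x * a) 0 := hF.congr_of_eventuallyEq (hEq.mono fun t h => h.symm)
  have huniq : deriv g x * a = (fderiv ℝ φ p) v + 0 := hF'.unique hRHS
  have hne : deriv g x ≠ 0 := ne_of_gt (hg' x hx)
  rw [add_zero] at huniq
  field_simp
  linarith [huniq]
end

section
/- (Lemma 5.3: the ODE satisfied by the scale function.) Let g be smooth on an open interval I with g'(x) > 0 for all x ∈ I. Suppose there exist δ₀ > 0 and a function h: (−δ₀, δ₀) → ℝ such that for all x ∈ I and all δ with |δ| < δ₀ and x + δ/g'(x) ∈ I, one has g(x + δ/g'(x)) − g(x) = h(δ) (that is, the expression is independent of x). Then g satisfies the third-order nonlinear ODE g'(x) g'''(x) = 2 (g''(x))² for all x ∈ I. -/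
open Filter Topology

/-- Lemma 5.3: the ODE satisfied by the scale function. -/
theorem stmt12 (I : Set ℝ) (hIopen : IsOpen I) (hIconn : I.OrdConnected)
    (hIne : I.Nonempty)
    (g : ℝ → ℝ) (hg : ContDiffOn ℝ (⊤ : ℕ∞) g I) (hg' : ∀ x ∈ I, 0 < deriv g x)
    (δ₀ : ℝ) (hδ₀ : 0 < δ₀) (h : ℝ → ℝ)
    (hmain : ∀ x ∈ I, ∀ δ : ℝ, |δ| < δ₀ → x + δ / deriv g x ∈ I →
      g (x + δ / deriv g x) - g x = h δ) :
    ∀ x ∈ I, deriv g x * iteratedDeriv 3 g x = 2 * (iteratedDeriv 2 g x) ^ 2 := by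
  have hg1 : ContDiffOn ℝ (⊤ : ℕ∞) (deriv g) I := hg.deriv_of_isOpen hIopen (by simp)
  have hg2 : ContDiffOn ℝ (⊤ : ℕ∞) (deriv (deriv g)) I := hg1.deriv_of_isOpen hIopen (by simp)
  have hd0 : ∀ x ∈ I, DifferentiableAt ℝ g x := fun x hx =>
    (hg.differentiableOn (by simp)).differentiableAt (hIopen.mem_nhds hx)
  have hd1 : ∀ x ∈ I, DifferentiableAt ℝ (deriv g) x := fun x hx =>
    (hg1.differentiableOn (by simp)).differentiableAt (hIopen.mem_nhds hx)
  have hd2 : ∀ x ∈ I, DifferentiableAt ℝ (deriv (deriv g)) x := fun x hx =>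
    (hg2.differentiableOn (by simp)).differentiableAt (hIopen.mem_nhds hx)
  -- membership eventually near 0
  have hnb : ∀ x ∈ I, ∀ᶠ δ in 𝓝 (0:ℝ), x + δ / deriv g x ∈ I := by
    intro x hx
    have hc : ContinuousAt (fun δ : ℝ => x + δ / deriv g x) 0 := by fun_prop
    exact hc.eventually_mem (by simpa using hIopen.mem_nhds hx)
  -- second derivative of the shifted difference at 0
  have key : ∀ x ∈ I, deriv (deriv (fun δ => g (x + δ / deriv g x) - g x)) 0
      = deriv (deriv g) x / (deriv g x) ^ 2 := by
    intro x hx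
    set d := deriv g x with hd
    have hd0' : d ≠ 0 := ne_of_gt (hg' x hx)
    have haff : ∀ δ : ℝ, HasDerivAt (fun t : ℝ => x + t / d) (1 / d) δ := by
      intro δ
      simpa using ((hasDerivAt_id δ).div_const d).const_add x
    have ev1 : deriv (fun δ => g (x + δ / d) - g x)
        =ᶠ[𝓝 (0:ℝ)] fun δ => deriv g (x + δ / d) * (1 / d) := by
      filter_upwards [hnb x hx] with δ hδ
      exact (((hd0 _ hδ).hasDerivAt.comp δ (haff δ)).sub_const (g x)).deriv
    rw [ev1.deriv_eq]
    have hgd : HasDerivAt (deriv g) (deriv (deriv g) x) (x + 0 / d) := by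
      simpa using (hd1 x hx).hasDerivAt
    have hcomp : HasDerivAt (fun δ : ℝ => deriv g (x + δ / d))
        (deriv (deriv g) x * (1 / d)) 0 := by have := hgd.comp 0 (haff 0); exact this
    have h2 : HasDerivAt (fun δ : ℝ => deriv g (x + δ / d) * (1 / d))
        (deriv (deriv g) x * (1 / d) * (1 / d)) 0 := hcomp.mul_const (1 / d)
    rw [h2.deriv, mul_one_div, mul_one_div, div_div, ← pow_two]
  -- constancy of g''/g'^2 on I
  have const : ∀ x ∈ I, ∀ y ∈ I,
      deriv (deriv g) x / (deriv g x) ^ 2 = deriv (deriv g) y / (deriv g y) ^ 2 := by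
    intro x hx y hy
    have hsm : ∀ᶠ δ in 𝓝 (0:ℝ), |δ| < δ₀ := by
      have := eventually_abs_sub_lt (0:ℝ) hδ₀
      simpa using this
    have hevx : (fun δ => g (x + δ / deriv g x) - g x) =ᶠ[𝓝 (0:ℝ)] h := by
      filter_upwards [hnb x hx, hsm] with δ h1 h2
      exact hmain x hx δ h2 h1
    have hevy : (fun δ => g (y + δ / deriv g y) - g y) =ᶠ[𝓝 (0:ℝ)] h := by
      filter_upwards [hnb y hy, hsm] with δ h1 h2
      exact hmain y hy δ h2 h1
    have hxy := hevx.trans hevy.symm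
    have := hxy.deriv.deriv_eq
    rw [← key x hx, ← key y hy, this]
  intro x hx
  set d := deriv g x with hdd
  have hdpos := hg' x hx
  have hd0' : d ≠ 0 := ne_of_gt hdpos
  -- the quotient function has derivative 0 at x
  set φ : ℝ → ℝ := fun y => deriv (deriv g) y / (deriv g y) ^ 2 with hφ
  have heq : φ =ᶠ[𝓝 x] fun _ => φ x := by
    filter_upwards [hIopen.mem_nhds hx] with y hy
    exact (const x hx y hy).symm
  have hconst0 : HasDerivAt φ 0 x :=
    (hasDerivAt_const x (φ x)).congr_of_eventuallyEq heq
  have hden : HasDerivAt (fun y => (deriv g y) ^ 2)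
      (2 * (deriv g x) ^ 1 * deriv (deriv g) x) x := (hd1 x hx).hasDerivAt.pow 2
  have hdiv : HasDerivAt φ
      ((deriv (deriv (deriv g)) x * (deriv g x) ^ 2 -
        deriv (deriv g) x * (2 * (deriv g x) ^ 1 * deriv (deriv g) x)) /
        ((deriv g x) ^ 2) ^ 2) x :=
    (hd2 x hx).hasDerivAt.div hden (by positivity)
  have hzero := hdiv.unique hconst0
  have hode : deriv g x * deriv (deriv (deriv g)) x = 2 * (deriv (deriv g) x) ^ 2 := by
    have h1 : deriv (deriv (deriv g)) x * (deriv g x) ^ 2 -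
        deriv (deriv g) x * (2 * (deriv g x) ^ 1 * deriv (deriv g) x) = 0 := by
      have hne : ((deriv g x) ^ 2) ^ 2 ≠ 0 := by positivity
      field_simp at hzero
      linear_combination (deriv g x) * hzero
    have := hd0'
    nlinarith [pow_pos hdpos 2, h1]
  have h3 : iteratedDeriv 3 g = deriv (deriv (deriv g)) := by
    simp [iteratedDeriv_succ, iteratedDeriv_one,
      show (3:ℕ) = 2 + 1 from rfl, show (2:ℕ) = 1 + 1 from rfl]
  have h2' : iteratedDeriv 2 g = deriv (deriv g) := by
    simp [iteratedDeriv_succ, iteratedDeriv_one, show (2:ℕ) = 1 + 1 from rfl]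
  rw [h3, h2']
  exact hode
end

section
/- (Lemma 5.4: solutions of the scale-function ODE.) Let g be smooth on a nonempty open interval I with g'(x) > 0 on I, and suppose g'(x) g'''(x) = 2 (g''(x))² for all x ∈ I. Then either g is affine, i.e. g(x) = c₀ + c₁x on I for some constants c₀ ∈ ℝ and c₁ > 0, or there exist constants a ∈ ℝ \ I and c₂ ≠ 0, c₃ ∈ ℝ such that g(x) = c₂ log|x − a| + c₃ for all x ∈ I. -/
open scoped ContDiff

/-- On an open convex set, a function with vanishing derivative is constant. -/
lemma const_of_hasDerivAt_zero' {s : Set ℝ} (hs : IsOpen s) (hc : Convex ℝ s) {f : ℝ → ℝ}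
    (hf : ∀ x ∈ s, HasDerivAt f 0 x) {x y : ℝ} (hx : x ∈ s) (hy : y ∈ s) : f x = f y := by
  refine hc.is_const_of_fderivWithin_eq_zero
    (fun z hz => ((hf z hz).differentiableAt).differentiableWithinAt) (fun z hz => ?_) hx hy
  rw [fderivWithin_of_isOpen hs hz, (hf z hz).hasFDerivAt.fderiv]
  ext; simp

/-- Lemma 5.4: solutions of the scale-function ODE g' g''' = 2 (g'')². -/
theorem stmt13 (I : Set ℝ) (hIopen : IsOpen I) (hIconn : I.OrdConnected)
    (hIne : I.Nonempty)
    (g : ℝ → ℝ) (hg : ContDiffOn ℝ (⊤ : ℕ∞) g I) (hg' : ∀ x ∈ I, 0 < deriv g x)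
    (hODE : ∀ x ∈ I, deriv g x * iteratedDeriv 3 g x = 2 * (iteratedDeriv 2 g x) ^ 2) :
    (∃ c₀ : ℝ, ∃ c₁ : ℝ, 0 < c₁ ∧ ∀ x ∈ I, g x = c₀ + c₁ * x) ∨
    (∃ a : ℝ, a ∉ I ∧ ∃ c₂ : ℝ, c₂ ≠ 0 ∧ ∃ c₃ : ℝ,
      ∀ x ∈ I, g x = c₂ * Real.log |x - a| + c₃) := by
  have hconv : Convex ℝ I := hIconn.convex
  set g1 := deriv g with hg1def
  set g2 := deriv g1 with hg2def
  set g3 := deriv g2 with hg3def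
  have hgi : ContDiffOn ℝ ∞ g I := hg.of_le (by simp)
  have hg1i : ContDiffOn ℝ ∞ g1 I := hgi.deriv_of_isOpen hIopen (by norm_num)
  have hg2i : ContDiffOn ℝ ∞ g2 I := hg1i.deriv_of_isOpen hIopen (by norm_num)
  have hg3i : ContDiffOn ℝ ∞ g3 I := hg2i.deriv_of_isOpen hIopen (by norm_num)
  -- basic HasDerivAt facts on I
  have hd1 : ∀ x ∈ I, HasDerivAt g1 (g2 x) x := fun x hx =>
    ((hg1i.differentiableOn (by norm_num) x hx).differentiableAt
      (hIopen.mem_nhds hx)).hasDerivAt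
  have hd2 : ∀ x ∈ I, HasDerivAt g2 (g3 x) x := fun x hx =>
    ((hg2i.differentiableOn (by norm_num) x hx).differentiableAt
      (hIopen.mem_nhds hx)).hasDerivAt
  have hODE' : ∀ x ∈ I, g1 x * g3 x = 2 * (g2 x) ^ 2 := by
    intro x hx
    have := hODE x hx
    rwa [show (3:ℕ) = 2+1 from rfl, show (2:ℕ) = 1+1 from rfl, iteratedDeriv_succ,
      iteratedDeriv_succ, iteratedDeriv_one] at this
  have hg1pos : ∀ x ∈ I, 0 < g1 x := hg'
  -- h = 1/g', φ = h'
  set φ : ℝ → ℝ := fun x => -(g2 x) / (g1 x) ^ 2 with hφdef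
  have hdh : ∀ x ∈ I, HasDerivAt (fun y => (g1 y)⁻¹) (φ x) x := by
    intro x hx
    simpa [hφdef, Pi.inv_def] using (hd1 x hx).inv (hg1pos x hx).ne'
  have hdφ : ∀ x ∈ I, HasDerivAt φ 0 x := by
    intro x hx
    have h1 := hd1 x hx
    have h2 := hd2 x hx
    have hne : g1 x ≠ 0 := (hg1pos x hx).ne'
    have : HasDerivAt φ
        (-(g3 x) * ((g1 x)^2)⁻¹ + -(g2 x) * (-((2:ℕ) * g1 x ^ 1 * g2 x) / ((g1 x)^2)^2)) x := by
      have hpow : HasDerivAt (fun y => (g1 y) ^ 2) ((2:ℕ) * g1 x ^ 1 * g2 x) x := h1.pow 2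
      have hinv := hpow.inv (pow_ne_zero 2 hne)
      simpa [hφdef, div_eq_mul_inv, Pi.neg_def, Pi.mul_def, Pi.inv_def] using (h2.neg.mul hinv)
    convert this using 1
    have hode := hODE' x hx
    push_cast
    field_simp
    linear_combination hode
  -- φ is constant α on I
  obtain ⟨x₀, hx₀⟩ := hIne
  set α := φ x₀ with hαdef
  have hφconst : ∀ x ∈ I, φ x = α := fun x hx =>
    const_of_hasDerivAt_zero' hIopen hconv hdφ hx hx₀
  -- h x = α x + β
  set β := (g1 x₀)⁻¹ - α * x₀ with hβdef
  have haffine : ∀ x ∈ I, (g1 x)⁻¹ = α * x + β := by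
    intro x hx
    have : (g1 x)⁻¹ - α * x = (g1 x₀)⁻¹ - α * x₀ := by
      apply const_of_hasDerivAt_zero' hIopen hconv (f := fun y => (g1 y)⁻¹ - α * y) _ hx hx₀
      intro y hy
      have := (hdh y hy).sub ((hasDerivAt_id y).const_mul α)
      simpa [hφconst y hy, Pi.sub_def] using this
    rw [hβdef]; linarith
  have hinvpos : ∀ x ∈ I, 0 < (g1 x)⁻¹ := fun x hx => inv_pos.2 (hg1pos x hx)
  by_cases hα : α = 0
  · -- affine case
    left
    have hβpos : 0 < β := by
      have h1 := haffine x₀ hx₀; have h2 := hinvpos x₀ hx₀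
      rw [hα] at h1; simp at h1; exact h1 ▸ h2
    have hg1c : ∀ x ∈ I, g1 x = β⁻¹ := by
      intro x hx
      have h := haffine x hx
      rw [hα] at h; simp at h
      rw [← h]; simp [(hg1pos x hx).ne']
    refine ⟨g x₀ - β⁻¹ * x₀, β⁻¹, inv_pos.2 hβpos, fun x hx => ?_⟩
    have hgd : ∀ y ∈ I, HasDerivAt g (g1 y) y := fun y hy =>
      ((hgi.differentiableOn (by norm_num) y hy).differentiableAt
        (hIopen.mem_nhds hy)).hasDerivAt
    have : g x - β⁻¹ * x = g x₀ - β⁻¹ * x₀ := by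
      apply const_of_hasDerivAt_zero' hIopen hconv (f := fun y => g y - β⁻¹ * y) _ hx hx₀
      intro y hy
      have := (hgd y hy).sub ((hasDerivAt_id y).const_mul β⁻¹)
      simpa [hg1c y hy, Pi.sub_def] using this
    linarith
  · -- log case
    right
    set a := -β / α with hadef
    have hxa : ∀ x ∈ I, α * x + β = α * (x - a) := by
      intro x hx; rw [hadef]; field_simp; ring
    have hnea : ∀ x ∈ I, x ≠ a := by
      intro x hx hcon
      have h := haffine x hx
      rw [hxa x hx, hcon, sub_self, mul_zero, inv_eq_zero] at h
      exact (hg1pos a (hcon ▸ hx)).ne' h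
    have haI : a ∉ I := fun h => (hnea a h) rfl
    have hg1x : ∀ x ∈ I, g1 x = α⁻¹ * (x - a)⁻¹ := by
      intro x hx
      have h := haffine x hx
      rw [hxa x hx] at h
      have h2 : g1 x = (α * (x - a))⁻¹ := by
        rw [← h]; simp [(hg1pos x hx).ne']
      rw [h2, mul_inv]
    have hgd : ∀ y ∈ I, HasDerivAt g (g1 y) y := fun y hy =>
      ((hgi.differentiableOn (by norm_num) y hy).differentiableAt
        (hIopen.mem_nhds hy)).hasDerivAt
    refine ⟨a, haI, α⁻¹, inv_ne_zero hα, g x₀ - α⁻¹ * Real.log |x₀ - a|, fun x hx => ?_⟩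
    have hlog : ∀ y ∈ I, HasDerivAt (fun z => Real.log |z - a|) ((y - a)⁻¹) y := by
      intro y hy
      have h1 : HasDerivAt (fun z : ℝ => z - a) 1 y := (hasDerivAt_id y).sub_const a
      have := (Real.hasDerivAt_log (sub_ne_zero.2 (hnea y hy))).comp y h1
      simp only [mul_one] at this
      refine this.congr_of_eventuallyEq ?_
      filter_upwards [hIopen.mem_nhds hy] with z hz
      simp [Function.comp, Real.log_abs]
    have : g x - α⁻¹ * Real.log |x - a| = g x₀ - α⁻¹ * Real.log |x₀ - a| := by
      apply const_of_hasDerivAt_zero' hIopen hconv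
        (f := fun y => g y - α⁻¹ * Real.log |y - a|) _ hx hx₀
      intro y hy
      have := (hgd y hy).sub ((hlog y hy).const_mul α⁻¹)
      simpa [hg1x y hy, Pi.sub_def] using this
    linarith
end

section
/- (Theorem 5.9: pathwise decomposition for (α,C)-generated strategies.) Let n ≥ 2, α > 0, C ≥ 0, let φ be smooth on an open neighborhood of Δ_n with e^{αφ} concave on Δ_n, and let μ: ℕ → Δ_n be any market sequence. Let η be the (α,C)-generated strategy: η_i(t) = α(C + V(t))(∂_iφ(μ(t)) − μ(t)·∇φ(μ(t))) + V(t), with V(t+1) = Σ_i η_i(t)μ_i(t+1) and V(0) given. If V(s) > −C for all s ≤ t, then (1/α) log((C + V(t))/(C + V(0))) = φ(μ(t)) − φ(μ(0)) + Σ_{s=0}^{t−1} D_{L^{(α)},φ}[μ(s+1) | μ(s)]. -/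
open Real Finset

/-- The L^{(α)}-divergence of φ. -/
noncomputable def LAlphaDiv (n : ℕ) (α : ℝ) (φ : (Fin n → ℝ) → ℝ)
    (q p : Fin n → ℝ) : ℝ :=
  (1 / α) * Real.log (1 + α * fderiv ℝ φ p (q - p)) - (φ q - φ p)

lemma sum_single_lin {n : ℕ} (L : (Fin n → ℝ) →L[ℝ] ℝ) (q p : Fin n → ℝ)
    (hq : ∑ i, q i = 1) :
    ∑ i, q i * L (Pi.single i 1 - p) = L (q - p) := by
  have h2 : ∑ i, q i * L (Pi.single i 1 - p)
      = L (∑ i, q i • ((Pi.single i 1 : Fin n → ℝ) - p)) := by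
    rw [map_sum]
    simp [smul_eq_mul]
  rw [h2]
  congr 1
  have h1 : ∑ i, q i • ((Pi.single i 1 : Fin n → ℝ) - p)
      = (∑ i, q i • (Pi.single i 1 : Fin n → ℝ)) - (∑ i, q i) • p := by
    simp only [smul_sub, Finset.sum_sub_distrib, Finset.sum_smul]
  rw [h1, hq, one_smul]
  congr 1
  ext j
  simp [Pi.single_apply, Finset.sum_ite_eq', mul_comm]

/-- Theorem 5.9: pathwise decomposition for (α,C)-generated strategies. -/
theorem stmt17 (n : ℕ) (hn : 2 ≤ n) (α C : ℝ) (hα : 0 < α) (hC : 0 ≤ C)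
    (U : Set (Fin n → ℝ)) (hU : IsOpen U) (hSU : openSimplex n ⊆ U)
    (φ : (Fin n → ℝ) → ℝ) (hφ : ContDiffOn ℝ (⊤ : ℕ∞) φ U)
    (hconc : ConcaveOn ℝ (openSimplex n) (fun p => exp (α * φ p)))
    (μ : ℕ → (Fin n → ℝ)) (hμ : ∀ t, μ t ∈ openSimplex n)
    (η : ℕ → Fin n → ℝ) (V : ℕ → ℝ)
    (hη : ∀ t i, η t i =
      α * (C + V t) * fderiv ℝ φ (μ t) (Pi.single i 1 - μ t) + V t)
    (hV : ∀ t, V (t + 1) = ∑ i, η t i * μ (t + 1) i) :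
    ∀ t : ℕ, (∀ s ≤ t, -C < V s) →
      (1 / α) * Real.log ((C + V t) / (C + V 0)) =
        φ (μ t) - φ (μ 0) +
          ∑ s ∈ Finset.range t, LAlphaDiv n α φ (μ (s + 1)) (μ s) := by
  intro t
  induction t with
  | zero =>
    intro h
    have h0 : 0 < C + V 0 := by linarith [h 0 le_rfl]
    simp [div_self (ne_of_gt h0)]
  | succ t ih =>
    intro h
    have hVt : 0 < C + V t := by linarith [h t (Nat.le_succ t)]
    have hVt1 : 0 < C + V (t + 1) := by linarith [h (t + 1) le_rfl]
    have hV0 : 0 < C + V 0 := by linarith [h 0 (Nat.zero_le _)]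
    set D := (fderiv ℝ φ (μ t) (μ (t + 1) - μ t) : ℝ) with hD
    have key : C + V (t + 1) = (C + V t) * (1 + α * D) := by
      have hsum1 : ∑ i, μ (t + 1) i = 1 := (hμ (t + 1)).2
      have hlin := sum_single_lin (fderiv ℝ φ (μ t)) (μ (t + 1)) (μ t) hsum1
      have hstep : V (t + 1) = α * (C + V t) *
          (∑ i, μ (t + 1) i * fderiv ℝ φ (μ t) (Pi.single i 1 - μ t))
          + V t * (∑ i, μ (t + 1) i) := by
        rw [hV t]
        simp only [hη]
        rw [Finset.mul_sum, Finset.mul_sum, ← Finset.sum_add_distrib]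
        exact Finset.sum_congr rfl fun i _ => by ring
      rw [hsum1, mul_one, hlin, ← hD] at hstep
      rw [hstep]; ring
    have hpos : 0 < 1 + α * D := by
      by_contra hle
      push_neg at hle
      nlinarith
    have hle : ∀ s ≤ t, -C < V s := fun s hs => h s (hs.trans (Nat.le_succ t))
    rw [Finset.sum_range_succ, key]
    have hdiv : (C + V t) * (1 + α * D) / (C + V 0)
        = ((C + V t) / (C + V 0)) * (1 + α * D) := by ring
    rw [hdiv, Real.log_mul (by positivity) (ne_of_gt hpos), mul_add, ih hle]
    simp only [LAlphaDiv]
    rw [← hD]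
    ring
end

section
/- (Quadratic approximation of the L-divergence.) Let n ≥ 2 and let φ be smooth on an open neighborhood of Δ_n with e^φ concave on Δ_n. Then for each p ∈ Δ_n, as Δp → 0 with Δp tangent to Δ_n (i.e. Σ_i Δp_i = 0 and p + Δp ∈ Δ_n), D_{L,φ}[p + Δp | p] = −(1/2) (Δp)ᵀ (Hess φ(p) + ∇φ(p)(∇φ(p))ᵀ) (Δp) + O(|Δp|³), where Hess φ(p) is the Euclidean Hessian matrix of φ at p. -/
open Real Asymptotics Filter Topology

/-- Cubic bound for the quadratic Taylor remainder of `log (1 + x)`. -/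
lemma log_quad_remainder {x : ℝ} (hx : |x| ≤ 1 / 2) :
    |Real.log (1 + x) - (x - x ^ 2 / 2)| ≤ 2 * |x| ^ 3 := by
  have h1 : |(-x)| < 1 := by rw [abs_neg]; linarith
  have H := Real.abs_log_sub_add_sum_range_le h1 2
  have hsum : (∑ i ∈ Finset.range 2, (-x) ^ (i + 1) / (i + 1)) = -x + x ^ 2 / 2 := by
    simp [Finset.sum_range_succ]
    ring
  rw [hsum, abs_neg] at H
  have hlog : Real.log (1 - -x) = Real.log (1 + x) := by ring_nf
  rw [hlog] at H
  have heq : |Real.log (1 + x) - (x - x ^ 2 / 2)| = |(-x + x ^ 2 / 2) + Real.log (1 + x)| := by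
    congr 1; ring
  rw [heq]
  have h2 : (1 : ℝ) - |x| ≥ 1 / 2 := by linarith
  have h3 : |x| ^ (2 + 1) / (1 - |x|) ≤ 2 * |x| ^ 3 := by
    rw [div_le_iff₀ (by linarith)]
    have hx3 : (0:ℝ) ≤ |x| ^ 3 := by positivity
    have hp3 : |x| ^ (2 + 1) = |x| ^ 3 := by norm_num
    rw [hp3]
    nlinarith [mul_nonneg hx3 (by linarith : (0:ℝ) ≤ 1 - |x| - 1/2)]
  calc |(-x + x ^ 2 / 2) + Real.log (1 + x)| ≤ |x| ^ (2 + 1) / (1 - |x|) := H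
    _ ≤ 2 * |x| ^ 3 := h3

/-- Second-order Taylor expansion with cubic remainder for a smooth function. -/
lemma taylor2_isBigO {E : Type*} [NormedAddCommGroup E] [NormedSpace ℝ E]
    {f : E → ℝ} {U : Set E} (hU : IsOpen U) (hf : ContDiffOn ℝ (⊤ : ℕ∞) f U)
    {p : E} (hp : p ∈ U) :
    (fun v => f (p + v) - f p - fderiv ℝ f p v
        - (1 / 2) * fderiv ℝ (fderiv ℝ f) p v v) =O[𝓝 0] fun v => ‖v‖ ^ 3 := by
  set f1 := fderiv ℝ f with hf1def
  set f2 := fderiv ℝ f1 with hf2def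
  have hat : ∀ x ∈ U, ContDiffAt ℝ (⊤ : ℕ∞) f x := fun x hx => hf.contDiffAt (hU.mem_nhds hx)
  have hf1at : ∀ x ∈ U, ContDiffAt ℝ (⊤ : ℕ∞) f1 x := fun x hx => (hat x hx).fderiv_right (by simp)
  have hd1 : ∀ x ∈ U, HasFDerivAt f (f1 x) x := fun x hx =>
    ((hat x hx).differentiableAt (by simp)).hasFDerivAt
  have hd2 : ∀ x ∈ U, HasFDerivAt f1 (f2 x) x := fun x hx =>
    ((hf1at x hx).differentiableAt (by simp)).hasFDerivAt
  have hsymm : ∀ v w, f2 p v w = f2 p w v := by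
    have hev : ∀ᶠ y in 𝓝 p, HasFDerivAt f (f1 y) y :=
      Filter.eventually_of_mem (hU.mem_nhds hp) hd1
    exact second_derivative_symmetric_of_eventually hev (hd2 p hp)
  -- Lipschitz bound for f2 near p
  obtain ⟨K, t, ht, hK⟩ : ∃ K : NNReal, ∃ t ∈ 𝓝 p, LipschitzOnWith K f2 t :=
    ((hf1at p hp).fderiv_right (by exact WithTop.coe_le_coe.2 (le_top : (1 + 1 : ℕ∞) ≤ ⊤) : (1 : WithTop ℕ∞) + 1 ≤ ((⊤ : ℕ∞) : WithTop ℕ∞))).exists_lipschitzOnWith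
  obtain ⟨r, hr0, hrsub⟩ : ∃ r > 0, Metric.closedBall p r ⊆ U ∩ t :=
    (Metric.nhds_basis_closedBall.mem_iff).1 (Filter.inter_mem (hU.mem_nhds hp) ht)
  set h : E → (E →L[ℝ] ℝ) := fun x => f1 x - f1 p - (f2 p x - f2 p p) with hhdef
  have hdh : ∀ x ∈ U, HasFDerivAt h (f2 x - f2 p) x := fun x hx =>
    ((hd2 x hx).sub_const (f1 p)).sub (((f2 p).hasFDerivAt).sub_const (f2 p p))
  have step1 : ∀ x ∈ Metric.closedBall p r, ‖h x‖ ≤ K * ‖x - p‖ ^ 2 := by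
    intro x hx
    have hxr : ‖x - p‖ ≤ r := by
      rw [← dist_eq_norm]; exact Metric.mem_closedBall.1 hx
    have hsub : Metric.closedBall p ‖x - p‖ ⊆ Metric.closedBall p r :=
      Metric.closedBall_subset_closedBall hxr
    have key := (convex_closedBall p ‖x - p‖).norm_image_sub_le_of_norm_hasFDerivWithin_le
      (f' := fun y => f2 y - f2 p)
      (fun y hy => (hdh y ((hrsub (hsub hy)).1)).hasFDerivWithinAt)
      (fun y hy => by
        have hyt : y ∈ t := (hrsub (hsub hy)).2
        have hpt : p ∈ t := (hrsub (Metric.mem_closedBall_self hr0.le)).2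
        have := hK.dist_le_mul y hyt p hpt
        rw [dist_eq_norm, dist_eq_norm] at this
        calc ‖f2 y - f2 p‖ ≤ K * ‖y - p‖ := this
          _ ≤ K * ‖x - p‖ := by
              gcongr
              rw [← dist_eq_norm]; exact Metric.mem_closedBall.1 hy)
      (Metric.mem_closedBall_self (norm_nonneg _))
      (by rw [Metric.mem_closedBall, dist_eq_norm])
    have hhp : h p = 0 := by simp [hhdef]
    rw [hhp, sub_zero] at key
    calc ‖h x‖ ≤ K * ‖x - p‖ * ‖x - p‖ := key
      _ = K * ‖x - p‖ ^ 2 := by ring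
  -- the quadratic function and its derivative
  have hq : ∀ x : E, HasFDerivAt (fun y => f2 p (y - p) (y - p))
      ((f2 p ((x : E) - p)).comp (ContinuousLinearMap.id ℝ E)
        + (f2 p).flip (x - p)) x := by
    intro x
    have h1 : HasFDerivAt (fun y : E => y - p) (ContinuousLinearMap.id ℝ E) x :=
      (hasFDerivAt_id x).sub_const p
    have h2 : HasFDerivAt (fun y : E => f2 p (y - p)) (f2 p) x := by
      simpa [Function.comp_def] using (f2 p).hasFDerivAt.comp x h1
    exact h2.clm_apply h1
  set g : E → ℝ := fun x => f x - f p - (f1 p x - f1 p p)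
      - (1 / 2) * (f2 p (x - p) (x - p)) with hgdef
  have hdg : ∀ x ∈ U, HasFDerivAt g (h x) x := by
    intro x hx
    have A : HasFDerivAt (fun y => f y - f p - (f1 p y - f1 p p)) (f1 x - f1 p) x :=
      ((hd1 x hx).sub_const (f p)).sub (((f1 p).hasFDerivAt).sub_const (f1 p p))
    have B := (hq x).const_mul (1 / 2 : ℝ)
    have C := A.sub B
    refine C.congr_fderiv ?_
    ext w
    simp only [hhdef, ContinuousLinearMap.sub_apply, ContinuousLinearMap.smul_apply,
      ContinuousLinearMap.add_apply, ContinuousLinearMap.comp_apply,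
      ContinuousLinearMap.coe_id', id_eq, ContinuousLinearMap.flip_apply,
      smul_eq_mul]
    have e1 : f2 p (x - p) w = f2 p x w - f2 p p w := by
      rw [map_sub]; simp
    have e2 : f2 p w (x - p) = f2 p (x - p) w := (hsymm w (x - p)).symm ▸ rfl
    rw [hsymm w (x - p)] at e2 ⊢
    rw [e1]
    ring
  have step2 : ∀ v : E, ‖v‖ ≤ r → ‖g (p + v)‖ ≤ K * ‖v‖ ^ 2 * ‖v‖ := by
    intro v hv
    have hsub : Metric.closedBall p ‖v‖ ⊆ Metric.closedBall p r :=
      Metric.closedBall_subset_closedBall hv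
    have key := (convex_closedBall p ‖v‖).norm_image_sub_le_of_norm_hasFDerivWithin_le
      (f' := h)
      (fun y hy => (hdg y ((hrsub (hsub hy)).1)).hasFDerivWithinAt)
      (fun y hy => by
        have h1 := step1 y (hsub hy)
        have h2 : ‖y - p‖ ≤ ‖v‖ := by
          rw [← dist_eq_norm]; exact Metric.mem_closedBall.1 hy
        calc ‖h y‖ ≤ K * ‖y - p‖ ^ 2 := h1
          _ ≤ K * ‖v‖ ^ 2 := by gcongr)
      (Metric.mem_closedBall_self (norm_nonneg _))
      (show p + v ∈ Metric.closedBall p ‖v‖ by simp [Metric.mem_closedBall, dist_eq_norm])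
    have hgp : g p = 0 := by simp [hgdef]
    rw [hgp, sub_zero] at key
    simpa using key
  apply Asymptotics.IsBigO.of_bound (K : ℝ)
  filter_upwards [Metric.closedBall_mem_nhds (0 : E) hr0] with v hv
  have hvr : ‖v‖ ≤ r := by
    rw [← dist_zero_right v]; exact Metric.mem_closedBall.1 hv
  have := step2 v hvr
  have hgv : g (p + v) = f (p + v) - f p - f1 p v - (1 / 2) * f2 p v v := by
    simp only [hgdef, add_sub_cancel_left]
    have : f1 p (p + v) - f1 p p = f1 p v := by rw [map_add]; ring
    rw [this]
  rw [hgv] at this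
  calc ‖f (p + v) - f p - fderiv ℝ f p v - 1 / 2 * (fderiv ℝ (fderiv ℝ f) p v) v‖
      ≤ K * ‖v‖ ^ 2 * ‖v‖ := this
    _ = K * ‖‖v‖ ^ 3‖ := by
        rw [Real.norm_eq_abs, abs_of_nonneg (by positivity)]; ring

/-- Quadratic approximation of the L-divergence:
D_{L,φ}[p + Δp | p] = −(1/2) Δpᵀ (Hess φ(p) + ∇φ(p)∇φ(p)ᵀ) Δp + O(|Δp|³),
as Δp → 0 tangentially to Δ_n. The Hessian quadratic form Δpᵀ Hess φ(p) Δp is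
expressed as the second iterated Fréchet derivative evaluated at (Δp, Δp), and
Δpᵀ ∇φ(p)∇φ(p)ᵀ Δp = (∇φ(p)·Δp)². -/
theorem stmt18 (n : ℕ) (hn : 2 ≤ n)
    (U : Set (Fin n → ℝ)) (hU : IsOpen U) (hSU : openSimplex n ⊆ U)
    (φ : (Fin n → ℝ) → ℝ) (hφ : ContDiffOn ℝ (⊤ : ℕ∞) φ U)
    (hconc : ConcaveOn ℝ (openSimplex n) (fun p => exp (φ p))) :
    ∀ p ∈ openSimplex n,
      (fun v : Fin n → ℝ =>
          LDiv n φ (p + v) p -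
            (-(1 / 2) *
              (iteratedFDeriv ℝ 2 φ p ![v, v] + (fderiv ℝ φ p v) ^ 2)))
        =O[nhdsWithin 0 {v : Fin n → ℝ | (∑ i, v i) = 0 ∧ p + v ∈ openSimplex n}]
        fun v => ‖v‖ ^ 3 := by
  intro p hp
  have hpU : p ∈ U := hSU hp
  set L := fderiv ℝ φ p with hLdef
  have hTaylor := taylor2_isBigO hU hφ hpU
  -- logarithmic part
  have hlog : (fun v : Fin n → ℝ => Real.log (1 + L v) - (L v - (L v) ^ 2 / 2))
      =O[𝓝 0] fun v => ‖v‖ ^ 3 := by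
    have hcont : Tendsto (fun v : Fin n → ℝ => |L v|) (𝓝 0) (𝓝 0) := by
      have := (L.continuous.tendsto 0).abs
      simpa using this
    have hev : ∀ᶠ v : Fin n → ℝ in 𝓝 0, |L v| ≤ 1 / 2 := by
      filter_upwards [hcont.eventually (gt_mem_nhds (by norm_num : (0:ℝ) < 1/2))] with v hv
      exact hv.le
    apply Asymptotics.IsBigO.of_bound (2 * ‖L‖ ^ 3)
    filter_upwards [hev] with v hv
    have h1 := log_quad_remainder hv
    have h2 : |L v| ≤ ‖L‖ * ‖v‖ := by
      rw [← Real.norm_eq_abs]; exact L.le_opNorm v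
    have h3 : |L v| ^ 3 ≤ (‖L‖ * ‖v‖) ^ 3 := by
      exact pow_le_pow_left₀ (abs_nonneg _) h2 3
    rw [Real.norm_eq_abs, Real.norm_eq_abs, abs_of_nonneg (by positivity : (0:ℝ) ≤ ‖v‖ ^ 3)]
    calc |Real.log (1 + L v) - (L v - (L v) ^ 2 / 2)| ≤ 2 * |L v| ^ 3 := h1
      _ ≤ 2 * (‖L‖ * ‖v‖) ^ 3 := by linarith
      _ = 2 * ‖L‖ ^ 3 * ‖v‖ ^ 3 := by ring
  have hcombined := hlog.sub hTaylor
  have heq : (fun v : Fin n → ℝ =>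
      LDiv n φ (p + v) p -
        (-(1 / 2) * (iteratedFDeriv ℝ 2 φ p ![v, v] + (fderiv ℝ φ p v) ^ 2))) =
      fun v : Fin n → ℝ => (Real.log (1 + L v) - (L v - (L v) ^ 2 / 2)) -
        (φ (p + v) - φ p - fderiv ℝ φ p v - (1 / 2) * fderiv ℝ (fderiv ℝ φ) p v v) := by
    funext v
    have hit : iteratedFDeriv ℝ 2 φ p ![v, v] = fderiv ℝ (fderiv ℝ φ) p v v := by
      rw [iteratedFDeriv_two_apply]
      simp
    rw [LDiv, hit]
    have hsub : p + v - p = v := add_sub_cancel_left p v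
    rw [hsub]
    ring
  rw [heq]
  exact hcombined.mono nhdsWithin_le_nhds
end

section
/- (Non-negativity of the L^{(α)}-divergence.) Let n ≥ 2, α > 0, and let φ be smooth on an open neighborhood of Δ_n with e^{αφ} concave on Δ_n. Then for all p, q ∈ Δ_n, 1 + α ∇φ(p)·(q − p) > 0 and D_{L^{(α)},φ}[q | p] = (1/α) log(1 + α ∇φ(p)·(q − p)) − (φ(q) − φ(p)) ≥ 0. -/
open Real

/-- Non-negativity of the L^{(α)}-divergence. -/
theorem stmt19 (n : ℕ) (hn : 2 ≤ n) (α : ℝ) (hα : 0 < α)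
    (U : Set (Fin n → ℝ)) (hU : IsOpen U) (hSU : openSimplex n ⊆ U)
    (φ : (Fin n → ℝ) → ℝ) (hφ : ContDiffOn ℝ (⊤ : ℕ∞) φ U)
    (hconc : ConcaveOn ℝ (openSimplex n) (fun p => exp (α * φ p))) :
    ∀ p ∈ openSimplex n, ∀ q ∈ openSimplex n,
      0 < 1 + α * fderiv ℝ φ p (q - p) ∧
      LAlphaDiv n α φ q p =
        (1 / α) * Real.log (1 + α * fderiv ℝ φ p (q - p)) - (φ q - φ p) ∧
      0 ≤ LAlphaDiv n α φ q p := by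
  intro p hp q hq
  have hpU : U ∈ nhds p := hU.mem_nhds (hSU hp)
  have hdφ : DifferentiableAt ℝ φ p :=
    ((hφ.contDiffAt hpU).differentiableAt (by simp))
  set L := fderiv ℝ φ p with hL
  set D := L (q - p) with hD
  -- Φ has derivative
  have hΦd : HasFDerivAt (fun x => exp (α * φ x)) (exp (α * φ p) • (α • L)) p := by
    have h1 : HasFDerivAt (fun x => α * φ x) (α • L) p := (hdφ.hasFDerivAt).const_mul α
    exact h1.exp
  have hpt : ∀ t : ℝ, p + t • (q - p) = (1 - t) • p + t • q := by
    intro t; funext i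
    simp [Pi.smul_apply, Pi.add_apply, Pi.sub_apply]
    ring
  -- key gradient inequality from concavity
  have key : exp (α * φ q) - exp (α * φ p) ≤ exp (α * φ p) * (α * D) := by
    have hline : HasDerivAt (fun t : ℝ => p + t • (q - p)) (q - p) 0 := by
      simpa using ((hasDerivAt_id (0 : ℝ)).smul_const (q - p)).const_add p
    have hΦd' : HasFDerivAt (fun x => exp (α * φ x)) (exp (α * φ p) • (α • L))
        ((fun t : ℝ => p + t • (q - p)) 0) := by simpa using hΦd
    have hf : HasDerivAt (fun t : ℝ => exp (α * φ (p + t • (q - p))))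
        (exp (α * φ p) * (α * D)) 0 := by
      have := hΦd'.comp_hasDerivAt 0 hline
      simpa [hD, mul_assoc, Function.comp_def] using this
    have hslope : Filter.Tendsto (slope (fun t : ℝ => exp (α * φ (p + t • (q - p)))) 0)
        (nhdsWithin 0 (Set.Ioi 0)) (nhds (exp (α * φ p) * (α * D))) := by
      have := hasDerivAt_iff_tendsto_slope.mp hf
      exact this.mono_left (nhdsWithin_mono 0 (fun t ht => ne_of_gt ht))
    have hev : ∀ᶠ t in nhdsWithin (0 : ℝ) (Set.Ioi 0),
        exp (α * φ q) - exp (α * φ p) ≤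
          slope (fun t : ℝ => exp (α * φ (p + t • (q - p)))) 0 t := by
      filter_upwards [Ioo_mem_nhdsGT_of_mem (Set.left_mem_Ico.mpr one_pos)] with t ht
      have ht0 : 0 < t := ht.1
      have ht1 : t < 1 := ht.2
      have hmem : (1 - t) • p + t • q ∈ openSimplex n :=
        hconc.1 hp hq (by linarith) ht0.le (by ring)
      have hcc := hconc.2 hp hq (by linarith : (0:ℝ) ≤ 1 - t) ht0.le (by ring)
      simp only [smul_eq_mul] at hcc
      rw [slope_def_field]
      simp only [zero_smul, add_zero, hpt t]
      rw [sub_zero, le_div_iff₀ ht0]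
      nlinarith [hcc]
    exact ge_of_tendsto hslope hev
  have hΦp : (0:ℝ) < exp (α * φ p) := exp_pos _
  have hΦq : (0:ℝ) < exp (α * φ q) := exp_pos _
  have hmain : exp (α * φ q) ≤ exp (α * φ p) * (1 + α * D) := by nlinarith
  have hpos : 0 < 1 + α * D := by
    have : 0 < exp (α * φ p) * (1 + α * D) := lt_of_lt_of_le hΦq hmain
    by_contra hc
    push_neg at hc
    nlinarith
  refine ⟨hpos, rfl, ?_⟩
  have hlog : α * φ q - α * φ p ≤ Real.log (1 + α * D) := by
    have h1 : exp (α * φ q - α * φ p) ≤ 1 + α * D := by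
      rw [exp_sub, div_le_iff₀ hΦp]
      linarith [hmain, mul_comm (exp (α * φ p)) (1 + α * D)]
    calc α * φ q - α * φ p = Real.log (exp (α * φ q - α * φ p)) := (log_exp _).symm
      _ ≤ Real.log (1 + α * D) := Real.log_le_log (exp_pos _) h1
  have hdiv : φ q - φ p ≤ (1 / α) * Real.log (1 + α * D) := by
    have h2 := mul_le_mul_of_nonneg_left hlog (le_of_lt (one_div_pos.mpr hα))
    have h3 : (1 / α) * (α * φ q - α * φ p) = φ q - φ p := by field_simp
    linarith [h2, h3.symm.le, h3.le]
  unfold LAlphaDiv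
  rw [← hL, ← hD]
  linarith
end
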